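/- arXiv:1404.0110 — 2 statements merged into one kernel-verified Lean document; each statement's English description precedes it below -/
import Mathlib

section
/- Let q be a prime power and u ∈ 𝔽_q³ a vector whose three coordinates are pairwise distinct and all nonzero (i.e., u ∈ D_q). Then |Ẽ(u)| = (q-1)(3q-11). -/
open Set Pointwise

variable {F : Type*} [Field F]

/-- Hamming distance on `𝔽_q³`. -/
noncomputable def hdist (u v : Fin 3 → F) : ℕ := Set.ncard {i : Fin 3 | u i ≠ v i}

/-- The ball of radius 1 centered at `u`. -/
def ball (u : Fin 3 → F) : Set (Fin 3 → F) := {v | hdist u v ≤ 1}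

/-- The extended ball of `u`: the union of the balls centered at scalar multiples of `u`. -/
def extBall (u : Fin 3 → F) : Set (Fin 3 → F) := ⋃ l : F, ball (l • u)

/-- `D_q`: vectors with pairwise distinct, nonzero coordinates. -/
def Dq : Set (Fin 3 → F) :=
  {u | u 0 ≠ u 1 ∧ u 0 ≠ u 2 ∧ u 1 ≠ u 2 ∧ u 0 ≠ 0 ∧ u 1 ≠ 0 ∧ u 2 ≠ 0}

/-- `B̃(u) = B(u) ∩ D_q`. -/
def ballD (u : Fin 3 → F) : Set (Fin 3 → F) := ball u ∩ Dq

/-- `Ẽ(u) = E(u) ∩ D_q`. -/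
def extBallD (u : Fin 3 → F) : Set (Fin 3 → F) := extBall u ∩ Dq

/-- `H` is a short covering if the extended balls centered at its elements cover the space. -/
def ShortCovering (H : Set (Fin 3 → F)) : Prop := (⋃ h ∈ H, extBall h) = Set.univ

/-!
A vector at Hamming distance at most one from `w` is `w` with one coordinate replaced. Hence for
`w ∈ D_q` the set `B̃(w)` consists of `w` and the `3 (q - 4)` vectors obtained by replacing one
coordinate of `w` by one of the `q - 4` values outside `{0, w₀, w₁, w₂}`: `|B̃(w)| = 3q - 11`.
Two vectors in balls of radius one around `λu` and `μu` agree in some coordinate `i`, which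
forces `λ uᵢ = μ uᵢ`, i.e. `λ = μ`; and no vector of `D_q` lies in the ball around `0`. So
`Ẽ(u)` is the disjoint union of the `q - 1` sets `B̃(λu)`, `λ ≠ 0`, each of size `3q - 11`.
-/

open Set Function

lemma Function.Injective.update_of_notMem_range {ι α : Type*} [DecidableEq ι] {w : ι → α}
    (hw : Injective w) (k : ι) {a : α} (ha : a ∉ range w) : Injective (update w k a) := by
  intro i j hij
  simp only [update_apply] at hij
  split_ifs at hij with hi hj hj
  · rw [hi, hj]
  · exact (ha ⟨j, hij.symm⟩).elim
  · exact (ha ⟨i, hij⟩).elim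
  · exact hw hij

lemma injOn_update_compl_range {ι α : Type*} [DecidableEq ι] (w : ι → α) :
    InjOn (fun p : ι × α => update w p.1 p.2) (univ ×ˢ (range w)ᶜ) := by
  rintro ⟨k, a⟩ ⟨-, ha⟩ ⟨k', a'⟩ ⟨-, -⟩ h
  dsimp only at h ha
  obtain rfl : k = k' := by
    by_contra hkk'
    exact ha ⟨k, by simpa [update_of_ne hkk'] using (congrFun h k).symm⟩
  simpa using congrFun h k

omit [Field F] in
lemma mem_ball_iff_exists_update {w v : Fin 3 → F} :
    v ∈ ball w ↔ ∃ k a, v = update w k a := by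
  simp only [ball, hdist, mem_ofPred_eq]
  rw [ncard_le_one_iff_subset_singleton]
  refine exists_congr fun k => ⟨fun h => ⟨v k, eq_update_iff.2 ⟨rfl, fun i hi => ?_⟩⟩, ?_⟩
  · exact of_not_not fun hne => hi (h (Ne.symm hne))
  · rintro ⟨a, rfl⟩ i hi
    by_contra hik
    exact hi (update_of_ne hik a w).symm

omit [Field F] in
lemma mem_ball_self (w : Fin 3 → F) : w ∈ ball w :=
  mem_ball_iff_exists_update.2 ⟨0, w 0, (update_eq_self 0 w).symm⟩

lemma eq_of_mem_ball_smul {u v : Fin 3 → F} (hu : ∀ i, u i ≠ 0) {l m : F}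
    (hl : v ∈ ball (l • u)) (hm : v ∈ ball (m • u)) : l = m := by
  obtain ⟨k, a, rfl⟩ := mem_ball_iff_exists_update.1 hl
  obtain ⟨k', b, h⟩ := mem_ball_iff_exists_update.1 hm
  obtain ⟨i, hik, hik'⟩ : ∃ i, i ≠ k ∧ i ≠ k' := by
    have : ∀ k k' : Fin 3, ∃ i, i ≠ k ∧ i ≠ k' := by decide
    exact this k k'
  have hi := congrFun h i
  rw [update_of_ne hik, update_of_ne hik'] at hi
  exact mul_right_cancel₀ (hu i) hi

lemma mem_Dq_iff {u : Fin 3 → F} : u ∈ Dq ↔ Injective u ∧ ∀ i, u i ≠ 0 := by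
  constructor
  · rintro ⟨h01, h02, h12, h0, h1, h2⟩
    refine ⟨fun i j hij => ?_, fun i => ?_⟩
    · fin_cases i <;> fin_cases j <;> simp_all [eq_comm]
    · fin_cases i <;> assumption
  · rintro ⟨hinj, hne⟩
    exact ⟨hinj.ne (by decide), hinj.ne (by decide), hinj.ne (by decide), hne 0, hne 1, hne 2⟩

lemma smul_mem_Dq {u : Fin 3 → F} {l : F} (hl : l ≠ 0) (hu : u ∈ Dq) : l • u ∈ Dq := by
  rw [mem_Dq_iff] at hu ⊢
  exact ⟨(mul_right_injective₀ hl).comp hu.1, fun i => mul_ne_zero hl (hu.2 i)⟩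

lemma update_mem_Dq {w : Fin 3 → F} (hw : w ∈ Dq) (k : Fin 3) {a : F}
    (ha : a ∉ insert 0 (range w)) : update w k a ∈ Dq := by
  obtain ⟨hinj, hne⟩ := mem_Dq_iff.1 hw
  rw [mem_insert_iff, not_or] at ha
  refine mem_Dq_iff.2 ⟨hinj.update_of_notMem_range k ha.2, fun i => ?_⟩
  rcases eq_or_ne i k with rfl | hi
  · rw [update_self]
    exact ha.1
  · rw [update_of_ne hi]
    exact hne i

lemma ballD_eq_insert_image {w : Fin 3 → F} (hw : w ∈ Dq) :
    ballD w = insert w ((fun p : Fin 3 × F => update w p.1 p.2) ''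
      (univ ×ˢ (insert 0 (range w))ᶜ)) := by
  ext v
  constructor
  · rintro ⟨hb, hv⟩
    obtain ⟨k, a, rfl⟩ := mem_ball_iff_exists_update.1 hb
    by_cases hak : a = w k
    · left
      rw [hak, update_eq_self]
    right
    refine ⟨(k, a), ⟨trivial, show a ∉ insert 0 (range w) from ?_⟩, rfl⟩
    obtain ⟨hinj, hne⟩ := mem_Dq_iff.1 hv
    rintro (ha0 | ⟨i, hia⟩)
    · exact hne k (by rw [update_self, ha0])
    · rcases eq_or_ne i k with rfl | hik
      · exact hak hia.symm
      · exact hik (hinj (by rw [update_of_ne hik, update_self, hia]))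
  · rintro (rfl | ⟨⟨k, a⟩, ⟨-, ha⟩, rfl⟩)
    · exact ⟨mem_ball_self v, hw⟩
    · exact ⟨mem_ball_iff_exists_update.2 ⟨k, a, rfl⟩, update_mem_Dq hw k ha⟩

lemma ncard_ballD [Finite F] {w : Fin 3 → F} (hw : w ∈ Dq) :
    (ballD w).ncard + 11 = 3 * Nat.card F := by
  obtain ⟨hinj, hne⟩ := mem_Dq_iff.1 hw
  have hzero : (0 : F) ∉ range w := fun ⟨i, hi⟩ => hne i hi
  have hcompl : (insert 0 (range w))ᶜ.ncard + 4 = Nat.card F := by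
    rw [← ncard_compl_add_ncard (insert 0 (range w)), ncard_insert_of_notMem hzero,
      ncard_range_of_injective hinj, Nat.card_fin]
  have hinjOn :
      InjOn (fun p : Fin 3 × F => update w p.1 p.2) (univ ×ˢ (insert 0 (range w))ᶜ) :=
    (injOn_update_compl_range w).mono
      (prod_mono subset_rfl (compl_subset_compl.2 (subset_insert _ _)))
  have hw_notMem : w ∉ (fun p : Fin 3 × F => update w p.1 p.2) ''
      (univ ×ˢ (insert 0 (range w))ᶜ) := by
    rintro ⟨⟨k, a⟩, ⟨-, ha⟩, h⟩
    exact ha (mem_insert_of_mem _ ⟨k, (update_eq_self_iff.1 h).symm⟩)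
  rw [ballD_eq_insert_image hw, ncard_insert_of_notMem hw_notMem, hinjOn.ncard_image, ncard_prod,
    ncard_univ, Nat.card_fin]
  omega

lemma extBallD_eq_iUnion_units (u : Fin 3 → F) :
    extBallD u = ⋃ l : Fˣ, ballD ((l : F) • u) := by
  ext v
  simp only [extBallD, extBall, ballD, mem_inter_iff, mem_iUnion]
  constructor
  · rintro ⟨⟨l, hl⟩, hv⟩
    have hl0 : l ≠ 0 := by
      rintro rfl
      have h0 : v ∈ ball ((0 : F) • v) := by rwa [zero_smul] at hl ⊢
      have h1 : v ∈ ball ((1 : F) • v) := by rw [one_smul]; exact mem_ball_self v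
      exact zero_ne_one (eq_of_mem_ball_smul (mem_Dq_iff.1 hv).2 h0 h1)
    exact ⟨Units.mk0 l hl0, hl, hv⟩
  · rintro ⟨l, hl, hv⟩
    exact ⟨⟨l, hl⟩, hv⟩

theorem stmt_7_general (q : ℕ) (F : Type*) [Field F] [Fintype F]
    (hcard : Fintype.card F = q) (u : Fin 3 → F) (hu : u ∈ (Dq : Set (Fin 3 → F))) :
    (extBallD u).ncard = (q - 1) * (3 * q - 11) := by
  classical
  have hdisj : Pairwise (Disjoint on fun l : Fˣ => ballD ((l : F) • u)) := fun l m hlm =>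
    disjoint_left.2 fun _ hl hm =>
      hlm (Units.ext (eq_of_mem_ball_smul (mem_Dq_iff.1 hu).2 hl.1 hm.1))
  have hcount (l : Fˣ) : (ballD ((l : F) • u)).ncard = 3 * q - 11 := by
    have := ncard_ballD (smul_mem_Dq l.ne_zero hu)
    rw [Nat.card_eq_fintype_card, hcard] at this
    omega
  rw [extBallD_eq_iUnion_units, ncard_iUnion_of_finite (fun _ => toFinite _) hdisj,
    finsum_eq_sum_of_fintype, Finset.sum_congr rfl fun l _ => hcount l, Finset.sum_const,
    Finset.card_univ, Fintype.card_units, hcard, smul_eq_mul]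

theorem stmt_7 (q : ℕ) (hq : IsPrimePow q) (F : Type*) [Field F] [Fintype F]
    (hcard : Fintype.card F = q) (u : Fin 3 → F) (hu : u ∈ (Dq : Set (Fin 3 → F))) :
    (extBallD u).ncard = (q - 1) * (3 * q - 11) :=
  stmt_7_general q F hcard u hu
end

section
/- Let q be a prime power and u ∈ 𝔽_q³ a vector all of whose three coordinates are nonzero. Then for all distinct nonzero scalars λ, λ' ∈ 𝔽_q*, the balls B(λu) and B(λ'u) are disjoint; consequently |Ẽ(u)| = (q-1)·|B̃(u)|. -/
open Set Pointwise

variable {F : Type*} [Field F]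

/-!
Multiplication by `λ ≠ 0` is a Hamming isometry that preserves `D_q`, so `Ẽ(u)` is the union of
the translates `λ • B̃(u)`, `λ ∈ 𝔽_q*`; the term `λ = 0` contributes nothing, because every vector
of `D_q` is at distance 3 from `0`. Distinct multiples `λu`, `λ'u` differ in all three coordinates,
so by the triangle inequality the radius-1 balls around them are disjoint, and the union has
`(q - 1) · |B̃(u)|` elements.
-/

open Function

lemma hdist_eq_hammingDist {α : Type*} [DecidableEq α] (u v : Fin 3 → α) :
    hdist u v = hammingDist u v := by
  rw [hdist, hammingDist, ← Set.ncard_coe_finset]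
  simp

lemma hammingDist_eq_card_of_forall_ne {ι : Type*} [Fintype ι] {β : ι → Type*}
    [∀ i, DecidableEq (β i)] {x y : ∀ i, β i} (h : ∀ i, x i ≠ y i) :
    hammingDist x y = Fintype.card ι := by
  rw [hammingDist, Finset.filter_true_of_mem fun i _ ↦ h i, Finset.card_univ]

lemma hdist_smul_smul (a : Fˣ) (u v : Fin 3 → F) : hdist (a • u) (a • v) = hdist u v := by
  classical
  simpa only [hdist_eq_hammingDist] using hammingDist_smul fun _ ↦ isSMulRegular_of_group a

lemma disjoint_ball_smul {u : Fin 3 → F} (hu : ∀ i, u i ≠ 0) {l l' : F} (hl : l ≠ l') :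
    Disjoint (ball (l • u)) (ball (l' • u)) := by
  classical
  refine Set.disjoint_left.mpr fun v hv hv' ↦ ?_
  have hfar : hammingDist (l • u) (l' • u) = 3 :=
    hammingDist_eq_card_of_forall_ne fun i h ↦ hl (mul_right_cancel₀ (hu i) h)
  have := hammingDist_triangle (l • u) v (l' • u)
  rw [ball, Set.mem_ofPred_eq, hdist_eq_hammingDist] at hv hv'
  rw [hammingDist_comm] at hv'
  omega

lemma ballD_zero : ballD (0 : Fin 3 → F) = ∅ := by
  classical
  refine Set.eq_empty_of_forall_notMem fun v ⟨hv, hvD⟩ ↦ ?_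
  obtain ⟨-, -, -, h0, h1, h2⟩ := hvD
  have hfar : hammingDist (0 : Fin 3 → F) v = 3 :=
    hammingDist_eq_card_of_forall_ne fun i ↦ Ne.symm (by fin_cases i <;> assumption)
  rw [ball, Set.mem_ofPred_eq, hdist_eq_hammingDist] at hv
  omega

lemma smul_mem_Dq_iff (a : Fˣ) {v : Fin 3 → F} : a • v ∈ Dq ↔ v ∈ Dq := by
  simp [Dq, Units.smul_def]

lemma ballD_smul (a : Fˣ) (u : Fin 3 → F) : ballD (a • u) = a • ballD u := by
  ext v
  rw [Set.mem_smul_set_iff_inv_smul_mem, ballD, ballD, Set.mem_inter_iff, Set.mem_inter_iff,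
    smul_mem_Dq_iff, ball, ball, Set.mem_ofPred_eq, Set.mem_ofPred_eq,
    ← hdist_smul_smul a u, smul_inv_smul]

lemma extBallD_eq_iUnion_ballD_smul (u : Fin 3 → F) : extBallD u = ⋃ a : Fˣ, ballD (a • u) := by
  rw [extBallD, extBall, Set.iUnion_inter]
  ext v
  simp only [Set.mem_iUnion]
  constructor
  · rintro ⟨l, hv⟩
    have hl : l ≠ 0 := by
      rintro rfl
      rwa [zero_smul, ← ballD, ballD_zero] at hv
    exact ⟨Units.mk0 l hl, hv⟩
  · exact fun ⟨a, hv⟩ ↦ ⟨a, hv⟩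

lemma pairwise_disjoint_ballD_smul {u : Fin 3 → F} (hu : ∀ i, u i ≠ 0) :
    Pairwise (Disjoint on fun a : Fˣ ↦ ballD (a • u)) := fun _ _ hab ↦
  (disjoint_ball_smul hu (Units.val_injective.ne hab)).mono Set.inter_subset_left
    Set.inter_subset_left

theorem stmt_8_general (q : ℕ) (F : Type*) [Field F] [Fintype F]
    (hcard : Fintype.card F = q) (u : Fin 3 → F) (h0 : ∀ i : Fin 3, u i ≠ 0) :
    (∀ l l' : F, l ≠ 0 → l' ≠ 0 → l ≠ l' → ball (l • u) ∩ ball (l' • u) = ∅) ∧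
    (extBallD u).ncard = (q - 1) * (ballD u).ncard := by
  classical
  refine ⟨fun l l' _ _ hl ↦ Set.disjoint_iff_inter_eq_empty.mp (disjoint_ball_smul h0 hl), ?_⟩
  rw [extBallD_eq_iUnion_ballD_smul,
    Set.ncard_iUnion_of_finite (fun _ ↦ Set.toFinite _) (pairwise_disjoint_ballD_smul h0),
    finsum_eq_sum_of_fintype]
  simp only [ballD_smul, Set.ncard_smul_set, Finset.sum_const, Finset.card_univ,
    Fintype.card_units, hcard, smul_eq_mul]

theorem stmt_8 (q : ℕ) (hq : IsPrimePow q) (F : Type*) [Field F] [Fintype F]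
    (hcard : Fintype.card F = q) (u : Fin 3 → F) (h0 : ∀ i : Fin 3, u i ≠ 0) :
    (∀ l l' : F, l ≠ 0 → l' ≠ 0 → l ≠ l' → ball (l • u) ∩ ball (l' • u) = ∅) ∧
    (extBallD u).ncard = (q - 1) * (ballD u).ncard :=
  stmt_8_general q F hcard u h0
end
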